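/- For each integer k ≥ 3, define α_1(k) = inf_{x∈(1/k,1)} ξ_1(x)/ψ(x), where ξ_1(x) = (1/(k−1))·(−log x − (k−1)·log((1−x)/(k−1)) + k·(x·log x + (1−x)·log((1−x)/(k−1)))); this is the 1-log-Sobolev constant of the Potts semigroup on [k]. Then lim_{k→∞} (log k)·( ((k−1)/k)·α_1(k) − 1 ) = 1; in other words, α_1(k) = (k/(k−1))·(1 + (1+o(1))/log k) as k → ∞. -/

import Mathlib

open scoped BigOperators

/-- `ψ(x) = log k + x log x + (1-x) log((1-x)/(k-1))`. -/
noncomputable def psi (k : ℕ) (x : ℝ) : ℝ :=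
  Real.log (k : ℝ) + x * Real.log x + (1 - x) * Real.log ((1 - x) / ((k : ℝ) - 1))

/-- `ξ_1(x)`. -/
noncomputable def xi1 (k : ℕ) (x : ℝ) : ℝ :=
  (1 / ((k : ℝ) - 1)) *
    (-Real.log x - ((k : ℝ) - 1) * Real.log ((1 - x) / ((k : ℝ) - 1))
      + (k : ℝ) * (x * Real.log x + (1 - x) * Real.log ((1 - x) / ((k : ℝ) - 1))))

/-- The 1-log-Sobolev constant of the Potts semigroup on `[k]`. -/
noncomputable def alpha1 (k : ℕ) : ℝ :=
  sInf {r : ℝ | ∃ x ∈ Set.Ioo (1 / (k : ℝ)) 1, r = xi1 k x / psi k x}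

/-!
Let `p_x = (x, (1-x)/(k-1), …, (1-x)/(k-1))` and `u` be uniform on `[k]`. Then `ψ(x) = D(p_x ‖ u)`
and `ξ₁ = k/(k-1) · (ψ + φ)` with the reverse divergence `φ(x) = D(u ‖ p_x)`, so
`((k-1)/k) α₁(k) - 1 = inf φ/ψ`.

Lower bound: once `log k ≥ 3`, `ψ ≤ log k · φ` on `(1/k, 1)`, since both vanish at `1/k` and
`ψ' ≤ log k · φ'`. With `w = (k-1)x/(1-x)` one has `ψ' = log w` and `log k · φ' = log k/(kx) · (w - 1)`,
which settles `kx ≤ log k`; for `kx ≥ log k` write `log w = log k + log x + log ((k-1)/(k(1-x)))`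
and bound both logarithms by `t - 1`.

Upper bound: at a fixed `d`, `φ(d) ≤ d/(1-d)` and `ψ(d) ≥ d log k - h(d)` with `h` the binary
entropy, so `log k · φ(d)/ψ(d) → 1/(1-d)`, which is as close to `1` as we like.
-/

open Real Filter Set

noncomputable def phi (k : ℕ) (x : ℝ) : ℝ :=
  -log k - (log x + (k - 1) * log ((1 - x) / (k - 1))) / k

theorem le_of_hasDerivAt_nonneg {f f' : ℝ → ℝ} {a b x : ℝ}
    (hf : ∀ y ∈ Ico a b, HasDerivAt f (f' y) y) (hf' : ∀ y ∈ Ioo a b, 0 ≤ f' y)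
    (hx : x ∈ Ico a b) : f a ≤ f x :=
  monotoneOn_of_hasDerivWithinAt_nonneg (convex_Ico a b)
    (fun y hy => (hf y hy).continuousAt.continuousWithinAt)
    (fun y hy => (hf y (interior_subset hy)).hasDerivWithinAt) (by rwa [interior_Ico])
    (left_mem_Ico.2 (hx.1.trans_lt hx.2)) hx hx.1

theorem lt_of_hasDerivAt_pos {f f' : ℝ → ℝ} {a b x : ℝ}
    (hf : ∀ y ∈ Ico a b, HasDerivAt f (f' y) y) (hf' : ∀ y ∈ Ioo a b, 0 < f' y)
    (hx : x ∈ Ioo a b) : f a < f x :=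
  strictMonoOn_of_hasDerivWithinAt_pos (convex_Ico a b)
    (fun y hy => (hf y hy).continuousAt.continuousWithinAt)
    (fun y hy => (hf y (interior_subset hy)).hasDerivWithinAt) (by rwa [interior_Ico])
    (left_mem_Ico.2 (hx.1.trans hx.2)) (Ioo_subset_Ico_self hx) hx.1

theorem tendsto_mul_div_mul_sub (a h : ℝ) {d : ℝ} (hd : d ≠ 0) :
    Tendsto (fun t => t * a / (d * t - h)) atTop (nhds (a / d)) := by
  have hden : Tendsto (fun t : ℝ => d - h * t⁻¹) atTop (nhds d) := by
    simpa using tendsto_const_nhds.sub (tendsto_inv_atTop_zero.const_mul h)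
  refine (tendsto_const_nhds.div hden hd).congr' ?_
  filter_upwards [eventually_gt_atTop 0] with t ht
  rw [Pi.div_apply, show d - h * t⁻¹ = (d * t - h) / t by field_simp, div_div_eq_mul_div]
  ring

theorem four_le_of_three_le_log {k : ℕ} (hk : 3 ≤ log k) : (4 : ℝ) ≤ k := by
  rcases k.eq_zero_or_pos with rfl | hk0
  · norm_num at hk
  · linarith [log_le_sub_one_of_pos (show (0 : ℝ) < k by exact_mod_cast hk0)]

section

variable {k : ℕ}

theorem xi1_eq (hk : k ≠ 0) (x : ℝ) : xi1 k x = k / (k - 1) * (psi k x + phi k x) := by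
  have : (k : ℝ) ≠ 0 := by exact_mod_cast hk
  unfold xi1 psi phi
  field_simp
  ring

theorem xi1_div_psi (hk : k ≠ 0) {x : ℝ} (hψ : psi k x ≠ 0) :
    xi1 k x / psi k x = k / (k - 1) * (1 + phi k x / psi k x) := by
  rw [xi1_eq hk, mul_div_assoc, add_div, div_self hψ]

theorem psi_one_div_self (hk : 1 < k) : psi k (1 / k) = 0 := by
  have hk' : (1 : ℝ) < k := by exact_mod_cast hk
  have : (1 - 1 / (k : ℝ)) / (k - 1) = 1 / k := by
    field_simp
    exact div_self (by linarith)
  rw [psi, this, one_div, log_inv]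
  field_simp
  ring

theorem phi_one_div_self (hk : 1 < k) : phi k (1 / k) = 0 := by
  have hk' : (1 : ℝ) < k := by exact_mod_cast hk
  have : (1 - 1 / (k : ℝ)) / (k - 1) = 1 / k := by
    field_simp
    exact div_self (by linarith)
  rw [phi, this, one_div, log_inv]
  field_simp
  ring

theorem hasDerivAt_psi (hk : 1 < k) {x : ℝ} (hx0 : 0 < x) (hx1 : x < 1) :
    HasDerivAt (psi k) (log x - log ((1 - x) / (k - 1))) x := by
  have hk' : (0 : ℝ) < k - 1 := sub_pos.2 (by exact_mod_cast hk)
  have hq : HasDerivAt (fun y : ℝ => (1 - y) / (k - 1)) (-1 / (k - 1)) x :=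
    ((hasDerivAt_id x).const_sub 1).div_const _ |>.congr_deriv (by simp [neg_div])
  have := ((hasDerivAt_mul_log hx0.ne').const_add (log k)).add
    (((hasDerivAt_id x).const_sub 1).mul (hq.log (by positivity)))
  refine this.congr_deriv ?_
  have : (1 - x) ≠ 0 := by linarith
  simp only [id]
  field_simp
  ring

theorem hasDerivAt_phi (hk : 1 < k) {x : ℝ} (hx0 : 0 < x) (hx1 : x < 1) :
    HasDerivAt (phi k) (((k - 1) / (1 - x) - 1 / x) / k) x := by
  have hk' : (0 : ℝ) < k - 1 := sub_pos.2 (by exact_mod_cast hk)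
  have hq : HasDerivAt (fun y : ℝ => (1 - y) / (k - 1)) (-1 / (k - 1)) x :=
    ((hasDerivAt_id x).const_sub 1).div_const _ |>.congr_deriv (by simp [neg_div])
  have := (((hasDerivAt_log hx0.ne').add
    ((hq.log (by positivity)).const_mul ((k : ℝ) - 1))).div_const (k : ℝ)).const_sub (-log k)
  refine this.congr_deriv ?_
  have : (1 - x) ≠ 0 := by linarith
  field_simp
  ring

theorem psi_pos (hk : 1 < k) {x : ℝ} (hx : x ∈ Ioo (1 / (k : ℝ)) 1) : 0 < psi k x := by
  have hk' : (1 : ℝ) < k := by exact_mod_cast hk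
  rw [← psi_one_div_self hk]
  refine lt_of_hasDerivAt_pos (fun y hy => hasDerivAt_psi hk (lt_of_lt_of_le (by positivity) hy.1)
    hy.2) (fun y hy => ?_) hx
  have hy0 : 0 < y := lt_trans (by positivity) hy.1
  have hky : 1 < k * y := by rw [← div_lt_iff₀' (by positivity)]; exact hy.1
  refine sub_pos.2 (log_lt_log (div_pos (by linarith [hy.2]) (by linarith)) ?_)
  rw [div_lt_iff₀ (by linarith)]
  linarith

theorem psi_deriv_le_log_mul_phi_deriv (hk : 3 ≤ log k) {x : ℝ} (hx : 1 / k < x) (hx1 : x < 1) :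
    log x - log ((1 - x) / (k - 1)) ≤ log k * (((k - 1) / (1 - x) - 1 / x) / k) := by
  set K : ℝ := (k : ℝ)
  set l := log K
  have hK : 1 < K := by linarith [four_le_of_three_le_log hk]
  have hK0 : 0 < K := by linarith
  have hK1 : 0 < K - 1 := by linarith
  have hx0 : 0 < x := lt_trans (by positivity) hx
  have h1x : 0 < 1 - x := by linarith
  have hu : 1 < K * x := by rwa [div_lt_iff₀ hK0, mul_comm] at hx
  set w := (K - 1) * x / (1 - x) with hw
  have hlhs : log x - log ((1 - x) / (K - 1)) = log w := by
    rw [← log_div hx0.ne' (by positivity), hw]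
    congr 1
    field_simp
  have hrhs : l * (((K - 1) / (1 - x) - 1 / x) / K) = l / (K * x) * (w - 1) := by
    rw [hw]
    field_simp
  have hw1 : 0 ≤ w - 1 := by
    rw [hw, sub_nonneg, le_div_iff₀ h1x]; nlinarith
  rw [hlhs, hrhs]
  rcases le_total (K * x) l with hsmall | hlarge
  · calc log w ≤ w - 1 := log_le_sub_one_of_pos (by linarith)
      _ ≤ l / (K * x) * (w - 1) :=
          le_mul_of_one_le_left hw1 ((one_le_div (by positivity)).2 hsmall)
  · set z := (K - 1) / (K * (1 - x)) with hz
    have hwz : log w = l + log x + log z := by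
      rw [← log_mul hK0.ne' hx0.ne', ← log_mul (by positivity) (by positivity), hw, hz]
      congr 1
      field_simp
    have hz1 : (K * x - 1) / K ≤ z - 1 := by
      have : z - 1 = (K * x - 1) / (K * (1 - x)) := by rw [hz]; field_simp; ring
      rw [this]
      exact div_le_div_of_nonneg_left (by linarith) (by positivity) (by nlinarith)
    have hwz1 : l / (K * x) * (w - 1) = l * (z - 1 / (K * x)) := by
      rw [hw, hz]
      field_simp
    have hlogx := log_le_sub_one_of_pos hx0
    have hlogz := log_le_sub_one_of_pos (show 0 < z by positivity)
    have h1 : (l - 1) * ((K * x - 1) / K) ≤ (l - 1) * (z - 1) :=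
      mul_le_mul_of_nonneg_left hz1 (by linarith)
    have h2 : x ≤ (l - 1) * ((K * x - 1) / K) := by
      rw [mul_div_assoc', le_div_iff₀ hK0]; nlinarith
    have h3 : l * (1 / (K * x)) ≤ 1 := by rw [mul_one_div]; exact (div_le_one (by positivity)).2 hlarge
    rw [hwz, hwz1]
    linarith

theorem psi_le_log_mul_phi (hk : 3 ≤ log k) {x : ℝ} (hx : x ∈ Ico (1 / (k : ℝ)) 1) :
    psi k x ≤ log k * phi k x := by
  have hk1 : 1 < k := by exact_mod_cast (show (1 : ℝ) < k by linarith [four_le_of_three_le_log hk])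
  have hpos : ∀ y ∈ Ico (1 / (k : ℝ)) 1, 0 < y := fun y hy => lt_of_lt_of_le (by positivity) hy.1
  have := le_of_hasDerivAt_nonneg (f := fun y => log k * phi k y - psi k y)
    (fun y hy => ((hasDerivAt_phi hk1 (hpos y hy) hy.2).const_mul (log k)).sub
      (hasDerivAt_psi hk1 (hpos y hy) hy.2))
    (fun y hy => sub_nonneg.2 (psi_deriv_le_log_mul_phi_deriv hk hy.1 hy.2)) hx
  simp only [phi_one_div_self hk1, psi_one_div_self hk1, mul_zero, sub_zero] at this
  linarith

theorem le_xi1_div_psi (hk : 3 ≤ log k) {x : ℝ} (hx : x ∈ Ioo (1 / (k : ℝ)) 1) :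
    k / (k - 1) * (1 + 1 / log k) ≤ xi1 k x / psi k x := by
  have hk1 : 1 < k := by exact_mod_cast (show (1 : ℝ) < k by linarith [four_le_of_three_le_log hk])
  have hψ := psi_pos hk1 hx
  rw [xi1_div_psi (by omega) hψ.ne']
  have : (0 : ℝ) < k - 1 := by linarith [four_le_of_three_le_log hk]
  gcongr _ * (1 + ?_)
  rw [div_le_div_iff₀ (by linarith) hψ, one_mul, mul_comm]
  exact psi_le_log_mul_phi hk (Ioo_subset_Ico_self hx)

theorem bddBelow_xi1_div_psi (hk : 3 ≤ log k) :
    BddBelow {r : ℝ | ∃ x ∈ Ioo (1 / (k : ℝ)) 1, r = xi1 k x / psi k x} :=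
  ⟨_, by rintro _ ⟨x, hx, rfl⟩; exact le_xi1_div_psi hk hx⟩

theorem one_le_log_mul_alpha1 (hk : 3 ≤ log k) :
    1 ≤ log k * ((k - 1) / k * alpha1 k - 1) := by
  have hk4 := four_le_of_three_le_log hk
  have hα : k / (k - 1) * (1 + 1 / log k) ≤ alpha1 k := by
    refine le_csInf ⟨_, 1 / 2, ⟨?_, by norm_num⟩, rfl⟩ ?_
    · rw [div_lt_div_iff₀ (by linarith) (by norm_num)]
      linarith
    · rintro _ ⟨x, hx, rfl⟩
      exact le_xi1_div_psi hk hx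
  calc (1 : ℝ) = log k * ((k - 1) / k * (k / (k - 1) * (1 + 1 / log k)) - 1) := by
        have : (k : ℝ) - 1 ≠ 0 := by linarith
        field_simp
        ring
    _ ≤ log k * ((k - 1) / k * alpha1 k - 1) := by
        have : (0 : ℝ) ≤ k - 1 := by linarith
        gcongr

theorem phi_le_div_one_sub (hk : 1 < k) {d : ℝ} (hd : d ∈ Ioo 0 1) (hkd : 1 ≤ k * d) :
    phi k d ≤ d / (1 - d) := by
  have hk' : (1 : ℝ) < k := by exact_mod_cast hk
  have h1d : 0 < 1 - d := by linarith [hd.2]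
  have hlogk : (k - 1) * log (k - 1) ≤ (k - 1) * log k :=
    mul_le_mul_of_nonneg_left (log_le_log (by linarith) (by linarith)) (by linarith)
  have hlogkd : 0 ≤ log k + log d := by
    rw [← log_mul (by positivity) hd.1.ne']; exact log_nonneg hkd
  have hlog1d : log (1 - d) ≤ 0 := log_nonpos h1d.le (by linarith [hd.1])
  have hlog1d' : -log (1 - d) ≤ d / (1 - d) := by
    have := log_le_sub_one_of_pos (inv_pos.2 h1d)
    rw [log_inv] at this
    calc -log (1 - d) ≤ (1 - d)⁻¹ - 1 := this
      _ = d / (1 - d) := by field_simp; ring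
  have hkphi : k * phi k d = -k * log k - log d - (k - 1) * (log (1 - d) - log (k - 1)) := by
    rw [phi, log_div h1d.ne' (by linarith)]
    field_simp
    ring
  have hk0 : (0 : ℝ) < k := by linarith
  refine le_of_mul_le_mul_left ?_ hk0
  rw [hkphi]
  linarith [mul_le_mul_of_nonneg_left hlog1d' hk0.le]

theorem mul_log_sub_binEntropy_le_psi (hk : 1 < k) {d : ℝ} (hd : d ∈ Ioo 0 1) :
    d * log k - binEntropy d ≤ psi k d := by
  have hk' : (1 : ℝ) < k := by exact_mod_cast hk
  have h1d : 0 < 1 - d := by linarith [hd.2]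
  have hlogk : log (k - 1) ≤ log k := log_le_log (by linarith) (by linarith)
  rw [psi, binEntropy, log_inv, log_inv, log_div h1d.ne' (by linarith)]
  nlinarith

theorem log_mul_alpha1_le (hk : 3 ≤ log k) {d : ℝ} (hd : d ∈ Ioo 0 1) (hkd : 1 < k * d)
    (hh : binEntropy d < d * log k) :
    log k * ((k - 1) / k * alpha1 k - 1) ≤ log k * (d / (1 - d)) / (d * log k - binEntropy d) := by
  have hk4 := four_le_of_three_le_log hk
  have hk1 : 1 < k := by exact_mod_cast (show (1 : ℝ) < k by linarith)
  have hdk : d ∈ Ioo (1 / (k : ℝ)) 1 := ⟨by rwa [div_lt_iff₀ (by linarith), mul_comm], hd.2⟩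
  have hψ := psi_pos hk1 hdk
  have hα : alpha1 k ≤ xi1 k d / psi k d := csInf_le (bddBelow_xi1_div_psi hk) ⟨d, hdk, rfl⟩
  have hlog : 0 ≤ log (k : ℝ) := by linarith
  calc log k * ((k - 1) / k * alpha1 k - 1)
      ≤ log k * ((k - 1) / k * (xi1 k d / psi k d) - 1) := by
        have : (0 : ℝ) ≤ k - 1 := by linarith
        gcongr
    _ = log k * phi k d / psi k d := by
        have : (k : ℝ) - 1 ≠ 0 := by linarith
        rw [xi1_div_psi (by omega) hψ.ne']
        field_simp
        ring
    _ ≤ log k * (d / (1 - d)) / (d * log k - binEntropy d) :=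
        div_le_div₀ (mul_nonneg hlog (div_nonneg hd.1.le (by linarith [hd.2])))
          (mul_le_mul_of_nonneg_left (phi_le_div_one_sub hk1 hd hkd.le) hlog) (sub_pos.2 hh)
          (mul_log_sub_binEntropy_le_psi hk1 hd)

end

/-- Second-order asymptotics of the 1-log-Sobolev constant:
`α₁(k) = (k/(k−1))·(1 + (1+o(1))/log k)` as `k → ∞`. -/
theorem alpha1_asymptotics :
    Filter.Tendsto (fun k : ℕ => Real.log (k : ℝ) * ((((k : ℝ) - 1) / (k : ℝ)) * alpha1 k - 1))
      Filter.atTop (nhds 1) := by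
  have hlog : Tendsto (fun k : ℕ => log (k : ℝ)) atTop atTop :=
    tendsto_log_atTop.comp tendsto_natCast_atTop_atTop
  refine tendsto_order.2 ⟨fun b hb => ?_, fun b hb => ?_⟩
  · filter_upwards [hlog.eventually_ge_atTop 3] with k hk
    exact hb.trans_le (one_le_log_mul_alpha1 hk)
  · obtain ⟨d, hd0, hdb⟩ := exists_between (show (0 : ℝ) < 1 - 1 / b by
      rw [sub_pos, div_lt_one (by linarith)]; exact hb)
    have hd1 : d < 1 := hdb.trans (sub_lt_self 1 (by positivity))
    have hlim : d / (1 - d) / d < b := by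
      rw [show d / (1 - d) / d = 1 / (1 - d) by field_simp, one_div_lt (by linarith) (by linarith)]
      linarith
    filter_upwards [hlog.eventually_ge_atTop 3,
      tendsto_natCast_atTop_atTop.eventually_gt_atTop (1 / d),
      hlog.eventually_gt_atTop (binEntropy d / d),
      ((tendsto_mul_div_mul_sub (d / (1 - d)) (binEntropy d) hd0.ne').comp hlog).eventually_lt_const
        hlim] with k hk hkd hh hbound
    refine (log_mul_alpha1_le hk ⟨hd0, hd1⟩ ?_ ?_).trans_lt hbound
    · rwa [div_lt_iff₀ hd0] at hkd
    · rwa [div_lt_iff₀ hd0, mul_comm] at hh
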